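/- Let b ≥ 2, θ, α ∈ ℝ and k ≥ 2. Then Σ_{i=0}^{k−1} ‖b^i θ + α‖² ≥ (k−1)·‖(b−1)α‖² / (4b²). -/
import Mathlib

/-- Distance from `x` to the nearest integer. -/
noncomputable def nint (x : ℝ) : ℝ := |x - round x|

lemma nint_nonneg (x : ℝ) : 0 ≤ nint x := abs_nonneg _

lemma nint_le_int (x : ℝ) (m : ℤ) : nint x ≤ |x - m| := round_le x m

lemma nint_sub_le (x y : ℝ) : nint (x - y) ≤ nint x + nint y := by
  have h := nint_le_int (x - y) (round x - round y)
  refine h.trans ?_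
  push_cast
  calc |x - y - ((round x : ℝ) - round y)| = |(x - round x) - (y - round y)| := by ring_nf
    _ ≤ |x - round x| + |y - round y| := abs_sub _ _
  
lemma nint_nat_mul_le (n : ℕ) (x : ℝ) : nint (n * x) ≤ n * nint x := by
  have h := nint_le_int (n * x) (n * round x)
  refine h.trans ?_
  push_cast
  rw [show (n : ℝ) * x - n * round x = n * (x - round x) by ring, abs_mul, Nat.abs_cast, nint]

/-- For `b ≥ 2`, reals `θ, α` and `k ≥ 2`,
`∑_{i=0}^{k−1} ‖b^i θ + α‖² ≥ (k−1)·‖(b−1)α‖² / (4b²)`. -/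
theorem sum_nint_sq_lower_bound (b k : ℕ) (hb : 2 ≤ b) (hk : 2 ≤ k) (θ α : ℝ) :
    ((k : ℝ) - 1) * nint ((b - 1 : ℝ) * α) ^ 2 / (4 * (b : ℝ) ^ 2) ≤
      ∑ i ∈ Finset.range k, nint ((b : ℝ) ^ i * θ + α) ^ 2 := by
  set f : ℕ → ℝ := fun i => nint ((b : ℝ) ^ i * θ + α) with hf
  set c : ℝ := nint ((b - 1 : ℝ) * α) with hc
  have hbpos : (0 : ℝ) < b := by positivity
  have key : ∀ i, c ≤ b * (f i + f (i + 1)) := by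
    intro i
    have h1 : c = nint ((b : ℝ) * ((b : ℝ) ^ i * θ + α) - ((b : ℝ) ^ (i+1) * θ + α)) := by
      rw [hc]; ring_nf
    rw [h1]
    calc nint ((b : ℝ) * ((b : ℝ) ^ i * θ + α) - ((b : ℝ) ^ (i+1) * θ + α))
        ≤ nint ((b : ℝ) * ((b : ℝ) ^ i * θ + α)) + nint ((b : ℝ) ^ (i+1) * θ + α) :=
          nint_sub_le _ _
      _ ≤ (b : ℝ) * nint ((b : ℝ) ^ i * θ + α) + nint ((b : ℝ) ^ (i+1) * θ + α) := by
          gcongr; exact nint_nat_mul_le b _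
      _ ≤ b * (f i + f (i + 1)) := by
          rw [mul_add]; gcongr
          have h2 : 0 ≤ f (i + 1) := nint_nonneg _
          have hb' : (2:ℝ) ≤ b := by exact_mod_cast hb
          nlinarith [h2, hb']
  -- squared pairwise bound
  have key2 : ∀ i, c ^ 2 / b ^ 2 ≤ 2 * (f i ^ 2 + f (i + 1) ^ 2) := by
    intro i
    have h := key i
    have h0 : 0 ≤ c := nint_nonneg _
    have h1 : 0 ≤ f i := nint_nonneg _
    have h2 : 0 ≤ f (i + 1) := nint_nonneg _
    rw [div_le_iff₀ (by positivity)]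
    nlinarith [sq_nonneg (f i - f (i + 1)), sq_nonneg (f i + f (i+1)),
      mul_self_nonneg (b * (f i + f (i+1)) - c)]
  have sum1 : ((k : ℝ) - 1) * (c ^ 2 / b ^ 2) ≤
      ∑ i ∈ Finset.range (k - 1), 2 * (f i ^ 2 + f (i + 1) ^ 2) := by
    have := Finset.sum_le_sum (fun i (_ : i ∈ Finset.range (k-1)) => key2 i)
    rw [Finset.sum_const, Finset.card_range, nsmul_eq_mul] at this
    have hk1 : ((k : ℝ) - 1) = ((k - 1 : ℕ) : ℝ) := by
      have : 1 ≤ k := le_trans one_le_two hk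
      push_cast [this]; ring
    rw [hk1]; exact this
  have sumA : ∑ i ∈ Finset.range (k - 1), f i ^ 2 ≤ ∑ i ∈ Finset.range k, f i ^ 2 := by
    apply Finset.sum_le_sum_of_subset_of_nonneg
    · exact Finset.range_subset_range.mpr (Nat.sub_le k 1)
    · intros; positivity
  have sumB : ∑ i ∈ Finset.range (k - 1), f (i + 1) ^ 2 ≤ ∑ i ∈ Finset.range k, f i ^ 2 := by
    have : ∑ i ∈ Finset.range (k - 1), f (i + 1) ^ 2
        = ∑ i ∈ Finset.Ico 1 k, f i ^ 2 := by
      rw [Finset.sum_Ico_eq_sum_range]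
      simp [add_comm]
    rw [this]
    apply Finset.sum_le_sum_of_subset_of_nonneg
    · intro x hx
      simp only [Finset.mem_Ico] at hx
      exact Finset.mem_range.mpr hx.2
    · intros; positivity
  have expand : ∑ i ∈ Finset.range (k - 1), 2 * (f i ^ 2 + f (i + 1) ^ 2)
      = 2 * ((∑ i ∈ Finset.range (k-1), f i ^ 2) + ∑ i ∈ Finset.range (k-1), f (i+1) ^ 2) := by
    simp only [mul_add, Finset.sum_add_distrib, Finset.mul_sum]
  have final : ((k : ℝ) - 1) * (c ^ 2 / b ^ 2) ≤ 4 * ∑ i ∈ Finset.range k, f i ^ 2 := by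
    calc ((k : ℝ) - 1) * (c ^ 2 / b ^ 2) ≤ _ := sum1
      _ = 2 * ((∑ i ∈ Finset.range (k-1), f i ^ 2) + ∑ i ∈ Finset.range (k-1), f (i+1) ^ 2) := expand
      _ ≤ 2 * ((∑ i ∈ Finset.range k, f i ^ 2) + ∑ i ∈ Finset.range k, f i ^ 2) := by
          gcongr
      _ = 4 * ∑ i ∈ Finset.range k, f i ^ 2 := by ring
  rw [div_le_iff₀ (by positivity)]
  calc ((k : ℝ) - 1) * c ^ 2 = (((k : ℝ) - 1) * (c ^ 2 / b ^ 2)) * b ^ 2 := by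
        field_simp
    _ ≤ (4 * ∑ i ∈ Finset.range k, f i ^ 2) * b ^ 2 := by
        gcongr
    _ = (∑ i ∈ Finset.range k, f i ^ 2) * (4 * b ^ 2) := by ring
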